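/- Let a bipartite weighted graph datum satisfy the Perron–Frobenius conditions at both even and odd vertices, with δ ≠ 0. Set T := ∑_{v ∈ V⁺} μ⁺(v) + ∑_{w ∈ V⁻} μ⁻(w), assume T ≠ 0, and set I := ∑_{v ∈ V⁺} μ⁺(v)² (the global index). Then the quantity s := 1 + T⁻²·(−(∑_{v ∈ V⁺} μ⁺(v)² + ∑_{w ∈ V⁻} μ⁻(w)²) + 2·∑_{e ∈ E} μ⁺(s(e))·μ⁻(t(e))) satisfies s = 1 + 2·T⁻²·(δ − 1)·I, and consequently 1 + T²·(s − 1) = 1 + 2·(δ − 1)·I. -/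

import Mathlib

/-!
Summing `μ⁺(s e) μ⁻(t e)` over the edges fibre by fibre, once over `V⁺` and once over `V⁻`,
the Perron–Frobenius conditions give `δ ∑ μ⁺² = δ ∑ μ⁻²`. Hence the two square sums agree
(as `δ ≠ 0`) and the bracket in `s` collapses to `2 (δ - 1) I`.
-/

open Finset

section Fiberwise

variable {ι κ R : Type*} [Fintype ι] [Fintype κ] [DecidableEq κ] [CommSemiring R]

theorem sum_mul_comp_eq_sum_mul_sum_fiber (p : ι → κ) (f : κ → R) (g : ι → R) :
    ∑ i, f (p i) * g i = ∑ k, f k * ∑ i ∈ univ.filter (fun i => p i = k), g i := by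
  rw [← sum_fiberwise univ p]
  refine sum_congr rfl fun k _ => ?_
  rw [mul_sum]
  exact sum_congr rfl fun i hi => by rw [(mem_filter.mp hi).2]

theorem sum_mul_comp_eq_mul_sum_sq {p : ι → κ} {f : κ → R} {g : ι → R} {δ : R}
    (h : ∀ k, ∑ i ∈ univ.filter (fun i => p i = k), g i = δ * f k) :
    ∑ i, f (p i) * g i = δ * ∑ k, f k ^ 2 := by
  rw [sum_mul_comp_eq_sum_mul_sum_fiber, mul_sum]
  exact sum_congr rfl fun k _ => by rw [h k]; ring

end Fiberwise

theorem free_group_parameter_eq_general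
    {Vp Vm E : Type*} [Fintype Vp] [Fintype Vm] [Fintype E]
    [DecidableEq Vp] [DecidableEq Vm]
    (s : E → Vp) (t : E → Vm) (μp : Vp → ℝ) (μm : Vm → ℝ) (δ : ℝ) (hδ : δ ≠ 0)
    (hPFeven : ∀ v : Vp, ∑ e ∈ Finset.univ.filter (fun e => s e = v), μm (t e) = δ * μp v)
    (hPFodd : ∀ w : Vm, ∑ e ∈ Finset.univ.filter (fun e => t e = w), μp (s e) = δ * μm w)
    (T : ℝ) (hT0 : T ≠ 0)
    (I : ℝ) (hI : I = ∑ v : Vp, (μp v) ^ 2)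
    (sParam : ℝ)
    (hs : sParam = 1 + T⁻¹ ^ 2 *
        (-((∑ v : Vp, (μp v) ^ 2) + ∑ w : Vm, (μm w) ^ 2)
          + 2 * ∑ e : E, μp (s e) * μm (t e))) :
    sParam = 1 + 2 * T⁻¹ ^ 2 * (δ - 1) * I ∧
      1 + T ^ 2 * (sParam - 1) = 1 + 2 * (δ - 1) * I := by
  have hEven : ∑ e, μp (s e) * μm (t e) = δ * ∑ v, μp v ^ 2 :=
    sum_mul_comp_eq_mul_sum_sq hPFeven
  have hOdd : ∑ e, μp (s e) * μm (t e) = δ * ∑ w, μm w ^ 2 := by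
    simp_rw [mul_comm (μp _)]
    exact sum_mul_comp_eq_mul_sum_sq hPFodd
  have hSq : ∑ w, μm w ^ 2 = ∑ v, μp v ^ 2 := mul_left_cancel₀ hδ (hOdd.symm.trans hEven)
  have hsParam : sParam = 1 + 2 * T⁻¹ ^ 2 * (δ - 1) * I := by
    rw [hs, hEven, hSq, hI]; ring
  refine ⟨hsParam, ?_⟩
  rw [hsParam]
  field_simp
  ring

/-- Numerical core of the main theorem: under the Perron–Frobenius conditions with
`δ ≠ 0`, `T = ∑ μ⁺ + ∑ μ⁻ ≠ 0`, `I = ∑_{v∈V⁺} μ⁺(v)²`, the free-group parameter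
`s = 1 + T⁻²(−(∑ μ⁺² + ∑ μ⁻²) + 2∑_e μ⁺(s e)μ⁻(t e))` satisfies
`s = 1 + 2T⁻²(δ−1)I` and `1 + T²(s−1) = 1 + 2(δ−1)I`. -/
theorem free_group_parameter_eq
    {Vp Vm E : Type*} [Fintype Vp] [Fintype Vm] [Fintype E]
    [DecidableEq Vp] [DecidableEq Vm]
    (s : E → Vp) (t : E → Vm) (μp : Vp → ℝ) (μm : Vm → ℝ) (δ : ℝ) (hδ : δ ≠ 0)
    (hPFeven : ∀ v : Vp, ∑ e ∈ Finset.univ.filter (fun e => s e = v), μm (t e) = δ * μp v)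
    (hPFodd : ∀ w : Vm, ∑ e ∈ Finset.univ.filter (fun e => t e = w), μp (s e) = δ * μm w)
    (T : ℝ) (hT : T = (∑ v : Vp, μp v) + ∑ w : Vm, μm w) (hT0 : T ≠ 0)
    (I : ℝ) (hI : I = ∑ v : Vp, (μp v) ^ 2)
    (sParam : ℝ)
    (hs : sParam = 1 + T⁻¹ ^ 2 *
        (-((∑ v : Vp, (μp v) ^ 2) + ∑ w : Vm, (μm w) ^ 2)
          + 2 * ∑ e : E, μp (s e) * μm (t e))) :
    sParam = 1 + 2 * T⁻¹ ^ 2 * (δ - 1) * I ∧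
      1 + T ^ 2 * (sParam - 1) = 1 + 2 * (δ - 1) * I :=
  free_group_parameter_eq_general s t μp μm δ hδ hPFeven hPFodd T hT0 I hI sParam hs
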